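/- Logarithmic asymptotes of a peripherally nondegenerate curve (the containment part of Theorem 1.1.A): Let a be a real Laurent polynomial in two variables whose Newton polygon Δ(a) has nonempty interior in ℝ², and suppose a is peripherally nondegenerate: for every side (one-dimensional face) Γ of Δ(a), the truncation a^Γ has no zero x ∈ (ℝ∖{0})² at which both partial derivatives of a^Γ also vanish. Let U be one of the four open quadrants of ℝ² and let l(x,y) = (log|x|, log|y|). Then for every ε > 0 there exists R > 0 such that for every point p ∈ l(V_U(a)) with |p| > R there are a side Γ of Δ(a) and a point q ∈ l(V_U(a^Γ)) with |p − q| < ε. (Each l(V_U(a^Γ)) is a finite union of parallel lines orthogonal to Γ, so far away from the origin the curve l(V_U(a)) lies near these asymptote lines.) -/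

import Mathlib

open scoped BigOperators Classical

/-- The value of a real Laurent polynomial in two variables at `x ∈ (ℝ∖0)²`. -/
noncomputable def laurentEval (a : (Fin 2 → ℤ) →₀ ℝ) (x : Fin 2 → ℝ) : ℝ :=
  ∑ ω ∈ a.support, a ω * ∏ i, x i ^ ω i

/-- The value of the `Γ`-truncation `a^Γ` at `x ∈ (ℝ∖0)²`. -/
noncomputable def laurentTruncEval (a : (Fin 2 → ℤ) →₀ ℝ) (Γ : Set (Fin 2 → ℝ))
    (x : Fin 2 → ℝ) : ℝ :=
  ∑ ω ∈ a.support, if (fun i => (ω i : ℝ)) ∈ Γ then a ω * ∏ i, x i ^ ω i else 0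

/-- The Newton polygon of `a`: the convex hull of its support. -/
noncomputable def newtonPolygon (a : (Fin 2 → ℤ) →₀ ℝ) : Set (Fin 2 → ℝ) :=
  convexHull ℝ ((fun ω : Fin 2 → ℤ => fun i => (ω i : ℝ)) '' ↑a.support)

/-- A side of a planar convex set: a nonempty exposed face whose affine hull is
one-dimensional. -/
def IsSide (A Γ : Set (Fin 2 → ℝ)) : Prop :=
  IsExposed ℝ A Γ ∧ Γ.Nonempty ∧ Module.finrank ℝ (vectorSpan ℝ Γ) = 1

/-- The coordinatewise logarithm of absolute values, `l(x,y) = (log|x|, log|y|)`. -/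
noncomputable def logMap (x : Fin 2 → ℝ) : Fin 2 → ℝ :=
  fun i => Real.log |x i|

section AuxPD
def pdot (w u : Fin 2 → ℝ) : ℝ := w 0 * u 0 + w 1 * u 1

lemma pdot_add_left (w w' u : Fin 2 → ℝ) : pdot (w + w') u = pdot w u + pdot w' u := by
  simp [pdot]; ring

lemma pdot_smul_left (r : ℝ) (w u : Fin 2 → ℝ) : pdot (r • w) u = r * pdot w u := by
  simp [pdot]; ring

lemma pdot_smul_right (r : ℝ) (w u : Fin 2 → ℝ) : pdot w (r • u) = r * pdot w u := by
  simp [pdot]; ring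

lemma pdot_sub_left (w w' u : Fin 2 → ℝ) : pdot (w - w') u = pdot w u - pdot w' u := by
  simp [pdot]; ring

lemma pdot_key (ν w u : Fin 2 → ℝ) :
    (ν 0 ^ 2 + ν 1 ^ 2) * pdot w u =
      pdot w ν * pdot u ν + pdot w ![-ν 1, ν 0] * pdot u ![-ν 1, ν 0] := by
  simp [pdot]; ring

lemma pdot_e_self (ν : Fin 2 → ℝ) : pdot ![-ν 1, ν 0] ![-ν 1, ν 0] = ν 0 ^ 2 + ν 1 ^ 2 := by
  simp [pdot]; ring

lemma sign_zpow {e x : ℝ} (he : e = 1 ∨ e = -1) (hx : 0 < e * x) (n : ℤ) :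
    x ^ n = e ^ n * Real.exp (n * Real.log |x|) := by
  have hx0 : x ≠ 0 := by
    rcases he with rfl | rfl <;> intro h <;> rw [h] at hx <;> simp at hx
  have hxa : (0:ℝ) < |x| := abs_pos.2 hx0
  have h1 : e * |x| = x := by
    rcases he with rfl | rfl
    · have : (0:ℝ) < x := by linarith [hx]
      simp [abs_of_pos this]
    · have hneg : x < 0 := by nlinarith
      simp [abs_of_neg hneg]
  calc x ^ n = (e * |x|) ^ n := by rw [h1]
    _ = e ^ n * |x| ^ n := mul_zpow _ _ _
    _ = e ^ n * Real.exp (Real.log |x|) ^ n := by rw [Real.exp_log hxa]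
    _ = e ^ n * Real.exp (n * Real.log |x|) := by
        rw [← Real.rpow_intCast (Real.exp _) n, ← Real.exp_mul, mul_comm (Real.log |x|) (n:ℝ)]

lemma monomial_rep {ε₁ ε₂ : ℝ} (hε₁ : ε₁ = 1 ∨ ε₁ = -1) (hε₂ : ε₂ = 1 ∨ ε₂ = -1)
    {x : Fin 2 → ℝ} (hx0 : 0 < ε₁ * x 0) (hx1 : 0 < ε₂ * x 1) (c : ℝ) (ω : Fin 2 → ℤ) :
    c * ∏ i, x i ^ ω i =
      (c * ε₁ ^ (ω 0) * ε₂ ^ (ω 1)) * Real.exp (pdot (fun i => (ω i : ℝ)) (logMap x)) := by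
  rw [Fin.prod_univ_two, sign_zpow hε₁ hx0, sign_zpow hε₂ hx1]
  simp only [pdot, logMap]
  rw [Real.exp_add]
  ring

lemma eval_rep (a : (Fin 2 → ℤ) →₀ ℝ) {ε₁ ε₂ : ℝ} (hε₁ : ε₁ = 1 ∨ ε₁ = -1)
    (hε₂ : ε₂ = 1 ∨ ε₂ = -1) {x : Fin 2 → ℝ} (hx0 : 0 < ε₁ * x 0) (hx1 : 0 < ε₂ * x 1) :
    laurentEval a x = ∑ ω ∈ a.support,
      (a ω * ε₁ ^ (ω 0) * ε₂ ^ (ω 1)) * Real.exp (pdot (fun i => (ω i : ℝ)) (logMap x)) := by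
  unfold laurentEval
  exact Finset.sum_congr rfl fun ω _ => monomial_rep hε₁ hε₂ hx0 hx1 _ ω

lemma trunc_rep (a : (Fin 2 → ℤ) →₀ ℝ) (Γ : Set (Fin 2 → ℝ)) {ε₁ ε₂ : ℝ}
    (hε₁ : ε₁ = 1 ∨ ε₁ = -1) (hε₂ : ε₂ = 1 ∨ ε₂ = -1) {x : Fin 2 → ℝ}
    (hx0 : 0 < ε₁ * x 0) (hx1 : 0 < ε₂ * x 1) :
    laurentTruncEval a Γ x = ∑ ω ∈ a.support, if (fun i => (ω i : ℝ)) ∈ Γ then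
      (a ω * ε₁ ^ (ω 0) * ε₂ ^ (ω 1)) * Real.exp (pdot (fun i => (ω i : ℝ)) (logMap x)) else 0 := by
  unfold laurentTruncEval
  refine Finset.sum_congr rfl fun ω _ => ?_
  split_ifs with h
  · exact monomial_rep hε₁ hε₂ hx0 hx1 _ ω
  · rfl

lemma exists_point {ε₁ ε₂ : ℝ} (hε₁ : ε₁ = 1 ∨ ε₁ = -1) (hε₂ : ε₂ = 1 ∨ ε₂ = -1)
    (u : Fin 2 → ℝ) :
    ∃ y : Fin 2 → ℝ, 0 < ε₁ * y 0 ∧ 0 < ε₂ * y 1 ∧ logMap y = u := by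
  have h1 : ε₁ * ε₁ = 1 := by rcases hε₁ with rfl | rfl <;> norm_num
  have h2 : ε₂ * ε₂ = 1 := by rcases hε₂ with rfl | rfl <;> norm_num
  have ha1 : |ε₁| = 1 := by rcases hε₁ with rfl | rfl <;> norm_num
  have ha2 : |ε₂| = 1 := by rcases hε₂ with rfl | rfl <;> norm_num
  refine ⟨fun i => (if i = 0 then ε₁ else ε₂) * Real.exp (u i), ?_, ?_, ?_⟩
  · have := Real.exp_pos (u 0)
    simp only [if_pos rfl]
    calc (0:ℝ) < Real.exp (u 0) := this
      _ = ε₁ * (ε₁ * Real.exp (u 0)) := by rw [← mul_assoc, h1, one_mul]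
  · have := Real.exp_pos (u 1)
    have hne : (1 : Fin 2) ≠ 0 := by decide
    simp only [if_neg hne]
    calc (0:ℝ) < Real.exp (u 1) := this
      _ = ε₂ * (ε₂ * Real.exp (u 1)) := by rw [← mul_assoc, h2, one_mul]
  · funext i
    fin_cases i <;>
      simp [logMap, abs_mul, abs_of_pos (Real.exp_pos _), ha1, ha2, Real.log_exp]
end AuxPD

open Real Filter Topology

set_option maxHeartbeats 2000000 in
/-- Logarithmic asymptotes of a peripherally nondegenerate curve (the containment part
of Theorem 1.1.A): if the Newton polygon of `a` has nonempty interior and every side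
truncation `a^Γ` is nonsingular on `(ℝ∖0)²`, then in each open quadrant `U`, every
point of `l(V_U(a))` far enough from the origin is `ε`-close to a point of
`l(V_U(a^Γ))` for some side `Γ` of the Newton polygon. -/
theorem log_asymptotes_of_peripherally_nondegenerate
    (a : (Fin 2 → ℤ) →₀ ℝ)
    (hint : (interior (newtonPolygon a)).Nonempty)
    (hperiph : ∀ Γ : Set (Fin 2 → ℝ), IsSide (newtonPolygon a) Γ →
      ∀ x : Fin 2 → ℝ, (∀ i, x i ≠ 0) → laurentTruncEval a Γ x = 0 →
        ¬ (∀ i : Fin 2, fderiv ℝ (laurentTruncEval a Γ) x (Pi.single i 1) = 0))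
    (ε₁ ε₂ : ℝ) (hε₁ : ε₁ = 1 ∨ ε₁ = -1) (hε₂ : ε₂ = 1 ∨ ε₂ = -1)
    (U : Set (Fin 2 → ℝ)) (hU : U = {x | 0 < ε₁ * x 0 ∧ 0 < ε₂ * x 1}) :
    ∀ ε : ℝ, 0 < ε → ∃ R : ℝ, 0 < R ∧
      ∀ x ∈ U, laurentEval a x = 0 → R < ‖logMap x‖ →
        ∃ Γ : Set (Fin 2 → ℝ), IsSide (newtonPolygon a) Γ ∧
          ∃ y ∈ U, laurentTruncEval a Γ y = 0 ∧ ‖logMap x - logMap y‖ < ε := by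
  intro ε hε
  by_contra hcon
  push_neg at hcon
  choose x hxU hx0 hxn hxfar using fun n : ℕ => hcon ((n:ℝ)+1) (by positivity)
  set A := newtonPolygon a with hA_def
  have hxs : ∀ n, 0 < ε₁ * x n 0 ∧ 0 < ε₂ * x n 1 := fun n => by
    have := hxU n; rw [hU] at this; exact this
  set s := a.support with hs_def
  have hsne : s.Nonempty := by
    rcases Finset.eq_empty_or_nonempty s with h | h
    · exfalso
      have hA : A = ∅ := by
        rw [hA_def]; unfold newtonPolygon; rw [← hs_def, h]; simp
      rw [hA] at hint
      simp at hint
    · exact h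
  set c : (Fin 2 → ℤ) → ℝ := fun ω => a ω * ε₁ ^ (ω 0) * ε₂ ^ (ω 1) with hc_def
  have hcne : ∀ ω ∈ s, c ω ≠ 0 := by
    intro ω hω
    have h1 : ε₁ ≠ 0 := by rcases hε₁ with rfl | rfl <;> norm_num
    have h2 : ε₂ ≠ 0 := by rcases hε₂ with rfl | rfl <;> norm_num
    have h3 : a ω ≠ 0 := Finsupp.mem_support_iff.1 hω
    exact mul_ne_zero (mul_ne_zero h3 (zpow_ne_zero _ h1)) (zpow_ne_zero _ h2)
  set cR : (Fin 2 → ℤ) → (Fin 2 → ℝ) := fun ω => fun i => (ω i : ℝ) with hcR_def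
  set u : ℕ → (Fin 2 → ℝ) := fun n => logMap (x n) with hu_def
  have hF : ∀ n, ∑ ω ∈ s, c ω * Real.exp (pdot (cR ω) (u n)) = 0 := by
    intro n
    have h := eval_rep a hε₁ hε₂ (hxs n).1 (hxs n).2
    rw [hx0 n] at h
    exact h.symm
  have hunorm : ∀ n : ℕ, (n:ℝ) + 1 < ‖u n‖ := hxn
  have hupos : ∀ n, (0:ℝ) < ‖u n‖ := fun n => lt_of_le_of_lt (by positivity) (hunorm n)
  set νs : ℕ → (Fin 2 → ℝ) := fun n => ‖u n‖⁻¹ • u n with hνs_def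
  have hνmem : ∀ n, νs n ∈ Metric.sphere (0 : Fin 2 → ℝ) 1 := by
    intro n
    rw [mem_sphere_zero_iff_norm]
    show ‖‖u n‖⁻¹ • u n‖ = 1
    rw [norm_smul, norm_inv, norm_norm]
    exact inv_mul_cancel₀ (ne_of_gt (hupos n))
  obtain ⟨ν, hνmem', ψ, hψ, hνlim⟩ := (isCompact_sphere (0 : Fin 2 → ℝ) 1).tendsto_subseq hνmem
  have hν1 : ‖ν‖ = 1 := mem_sphere_zero_iff_norm.1 hνmem'
  have hν0 : ν ≠ 0 := by intro h; rw [h] at hν1; simp at hν1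
  have hulim : Tendsto (fun n => ‖u (ψ n)‖) atTop atTop := by
    apply tendsto_atTop_mono (fun n => ?_) tendsto_natCast_atTop_atTop
    calc (n : ℝ) ≤ ψ n := by exact_mod_cast hψ.le_apply
      _ ≤ ‖u (ψ n)‖ := by linarith [hunorm (ψ n)]
  have hνsval : ∀ w : Fin 2 → ℝ, ∀ m, pdot w (νs m) = ‖u m‖⁻¹ * pdot w (u m) := by
    intro w m
    show pdot w (‖u m‖⁻¹ • u m) = _
    exact pdot_smul_right _ _ _
  have hνlim' : ∀ w : Fin 2 → ℝ, Tendsto (fun n => pdot w (νs (ψ n))) atTop (𝓝 (pdot w ν)) := by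
    intro w
    have h := tendsto_pi_nhds.1 hνlim
    have h0 := h 0
    have h1 := h 1
    simp only [Function.comp] at h0 h1
    have := ((h0.const_mul (w 0)).add (h1.const_mul (w 1)))
    simpa [pdot] using this
  obtain ⟨ω₀', hω₀'s, hmax⟩ := s.exists_max_image (fun ω => pdot (cR ω) ν) hsne
  set M : ℝ := pdot (cR ω₀') ν with hM_def
  set T : Finset (Fin 2 → ℤ) := s.filter (fun ω => pdot (cR ω) ν = M) with hT_def
  have hω₀'T : ω₀' ∈ T := Finset.mem_filter.2 ⟨hω₀'s, rfl⟩
  set e : Fin 2 → ℝ := ![-ν 1, ν 0] with he_def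
  have he0 : e 0 = -ν 1 := rfl
  have he1 : e 1 = ν 0 := rfl
  set q : ℝ := ν 0 ^ 2 + ν 1 ^ 2 with hq_def
  have hq : 0 < q := by
    have h : ν 0 ≠ 0 ∨ ν 1 ≠ 0 := by
      by_contra h
      push_neg at h
      apply hν0
      funext i
      fin_cases i
      · exact h.1
      · exact h.2
    rcases h with h | h
    · have := mul_self_pos.2 h
      rw [hq_def]
      nlinarith [sq_nonneg (ν 1)]
    · have := mul_self_pos.2 h
      rw [hq_def]
      nlinarith [sq_nonneg (ν 0)]
  obtain ⟨ω₀, hω₀T, hdmin⟩ := T.exists_min_image (fun ω => pdot (cR ω) e) ⟨ω₀', hω₀'T⟩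
  have hω₀s : ω₀ ∈ s := (Finset.mem_filter.1 hω₀T).1
  have hω₀M : pdot (cR ω₀) ν = M := (Finset.mem_filter.1 hω₀T).2
  set d : (Fin 2 → ℤ) → ℝ := fun ω => pdot (cR ω) e - pdot (cR ω₀) e with hd_def
  have hd00 : d ω₀ = 0 := sub_self _
  have hdnn : ∀ ω ∈ T, 0 ≤ d ω := fun ω hω => sub_nonneg.2 (hdmin ω hω)
  have hcRval : ∀ (ω : Fin 2 → ℤ) (i : Fin 2), cR ω i = (ω i : ℝ) := fun ω i => rfl
  have hdinj : ∀ ω ∈ T, ∀ ω' ∈ T, d ω = d ω' → ω = ω' := by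
    intro ω hω ω' hω' hdd
    have h1 : pdot (cR ω) ν = pdot (cR ω') ν := by
      rw [(Finset.mem_filter.1 hω).2, (Finset.mem_filter.1 hω').2]
    have h2 : pdot (cR ω) e = pdot (cR ω') e := by
      have := hdd
      simp only [hd_def] at this
      linarith
    simp only [pdot, he0, he1] at h1 h2
    have g0 : q * (cR ω 0 - cR ω' 0) = 0 := by
      rw [hq_def]; linear_combination ν 0 * h1 - ν 1 * h2
    have g1 : q * (cR ω 1 - cR ω' 1) = 0 := by
      rw [hq_def]; linear_combination ν 1 * h1 + ν 0 * h2
    have e0 : cR ω 0 = cR ω' 0 := by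
      have := (mul_eq_zero.1 g0).resolve_left (ne_of_gt hq)
      linarith
    have e1 : cR ω 1 = cR ω' 1 := by
      have := (mul_eq_zero.1 g1).resolve_left (ne_of_gt hq)
      linarith
    funext i
    fin_cases i
    · rw [hcRval, hcRval] at e0; exact_mod_cast e0
    · rw [hcRval, hcRval] at e1; exact_mod_cast e1
  set α : ℕ → ℝ := fun n => pdot (u (ψ n)) e / q with hα_def
  set φ : ℝ → ℝ := fun t => ∑ ω ∈ T, c ω * Real.exp (t * d ω) with hφ_def
  have hdotT : ∀ ω ∈ T, ∀ v : Fin 2 → ℝ,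
      pdot (cR ω) v = pdot (cR ω₀) v + d ω * (pdot v e / q) := by
    intro ω hω v
    have k1 := pdot_key ν (cR ω) v
    have k2 := pdot_key ν (cR ω₀) v
    rw [← he_def, ← hq_def] at k1 k2
    have hm : pdot (cR ω) ν = M := (Finset.mem_filter.1 hω).2
    have hmm : pdot (cR ω) ν = pdot (cR ω₀) ν := hm.trans hω₀M.symm
    have hmain : q * pdot (cR ω) v = q * pdot (cR ω₀) v + d ω * pdot v e := by
      simp only [hd_def]
      linear_combination k1 - k2 + pdot v ν * hmm
    field_simp
    linarith [hmain]
  have hTpart : ∀ v : Fin 2 → ℝ,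
      ∑ ω ∈ T, c ω * Real.exp (pdot (cR ω) v)
        = Real.exp (pdot (cR ω₀) v) * φ (pdot v e / q) := by
    intro v
    rw [hφ_def, Finset.mul_sum]
    refine Finset.sum_congr rfl fun ω hω => ?_
    rw [hdotT ω hω v, Real.exp_add]
    ring
  have hφtail : ∀ n, φ (α n) = - ∑ ω ∈ s.filter (fun ω => ¬ pdot (cR ω) ν = M),
      c ω * Real.exp (pdot (cR ω) (u (ψ n)) - pdot (cR ω₀) (u (ψ n))) := by
    intro n
    have h0 := hF (ψ n)
    rw [← Finset.sum_filter_add_sum_filter_not s (fun ω => pdot (cR ω) ν = M)] at h0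
    rw [← hT_def] at h0
    have hTsum : ∑ ω ∈ T, c ω * Real.exp (pdot (cR ω) (u (ψ n)))
        = Real.exp (pdot (cR ω₀) (u (ψ n))) * φ (α n) := hTpart (u (ψ n))
    have hNsum : ∑ ω ∈ s.filter (fun ω => ¬ pdot (cR ω) ν = M),
          c ω * Real.exp (pdot (cR ω) (u (ψ n)))
        = Real.exp (pdot (cR ω₀) (u (ψ n))) * ∑ ω ∈ s.filter (fun ω => ¬ pdot (cR ω) ν = M),
          c ω * Real.exp (pdot (cR ω) (u (ψ n)) - pdot (cR ω₀) (u (ψ n))) := by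
      rw [Finset.mul_sum]
      refine Finset.sum_congr rfl fun ω hω => ?_
      rw [Real.exp_sub]
      have hE := (Real.exp_pos (pdot (cR ω₀) (u (ψ n)))).ne'
      field_simp
    rw [hTsum, hNsum] at h0
    have hE := (Real.exp_pos (pdot (cR ω₀) (u (ψ n)))).ne'
    have h0' : Real.exp (pdot (cR ω₀) (u (ψ n))) *
        (φ (α n) + ∑ ω ∈ s.filter (fun ω => ¬ pdot (cR ω) ν = M),
          c ω * Real.exp (pdot (cR ω) (u (ψ n)) - pdot (cR ω₀) (u (ψ n)))) = 0 := by
      linear_combination h0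
    rcases mul_eq_zero.1 h0' with h | h
    · exact absurd h hE
    · linarith
  have htail : Tendsto (fun n => ∑ ω ∈ s.filter (fun ω => ¬ pdot (cR ω) ν = M),
      c ω * Real.exp (pdot (cR ω) (u (ψ n)) - pdot (cR ω₀) (u (ψ n)))) atTop (𝓝 0) := by
    have hz : (0:ℝ) = ∑ ω ∈ s.filter (fun ω => ¬ pdot (cR ω) ν = M), (0:ℝ) := by simp
    rw [hz]
    refine tendsto_finset_sum _ fun ω hω => ?_
    obtain ⟨hωs, hωne⟩ := Finset.mem_filter.1 hω
    have hωlt : pdot (cR ω) ν < M := lt_of_le_of_ne (hmax ω hωs) hωne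
    have heq : ∀ n, pdot (cR ω) (u (ψ n)) - pdot (cR ω₀) (u (ψ n))
        = ‖u (ψ n)‖ * (pdot (cR ω) (νs (ψ n)) - pdot (cR ω₀) (νs (ψ n))) := by
      intro n
      rw [hνsval, hνsval]
      have hne := ne_of_gt (hupos (ψ n))
      field_simp
    have hC : pdot (cR ω) ν - pdot (cR ω₀) ν < 0 := by rw [hω₀M]; linarith
    have hg : Tendsto (fun n => pdot (cR ω) (νs (ψ n)) - pdot (cR ω₀) (νs (ψ n))) atTop
        (𝓝 (pdot (cR ω) ν - pdot (cR ω₀) ν)) := (hνlim' _).sub (hνlim' _)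
    have hprod : Tendsto (fun n => ‖u (ψ n)‖ *
        (pdot (cR ω) (νs (ψ n)) - pdot (cR ω₀) (νs (ψ n)))) atTop atBot :=
      Filter.Tendsto.atTop_mul_neg hC hulim hg
    have hexp := Real.tendsto_exp_atBot.comp hprod
    simp only [heq]
    simpa using hexp.const_mul (c ω)
  have hφ0 : Tendsto (fun n => φ (α n)) atTop (𝓝 0) := by
    have hfe : (fun n => φ (α n)) = fun n => - ∑ ω ∈ s.filter (fun ω => ¬ pdot (cR ω) ν = M),
        c ω * Real.exp (pdot (cR ω) (u (ψ n)) - pdot (cR ω₀) (u (ψ n))) := funext hφtail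
    rw [hfe]
    simpa using htail.neg
  by_cases hex : ∃ ω₁ ∈ T, d ω₁ ≠ 0
  case neg =>
    push_neg at hex
    have hTsing : T = {ω₀} := by
      apply Finset.eq_singleton_iff_unique_mem.2
      refine ⟨hω₀T, fun ω hω => ?_⟩
      exact hdinj ω hω ω₀ hω₀T (by rw [hex ω hω, hd00])
    have hφconst : ∀ t, φ t = c ω₀ := by
      intro t
      simp only [hφ_def, hTsing, Finset.sum_singleton, hd00, mul_zero, Real.exp_zero, mul_one]
    have hczero : c ω₀ = 0 := by
      have h1 : Tendsto (fun _ : ℕ => c ω₀) atTop (𝓝 (c ω₀)) := tendsto_const_nhds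
      have h2 : (fun n : ℕ => φ (α n)) = fun _ : ℕ => c ω₀ := funext fun n => hφconst (α n)
      rw [h2] at hφ0
      exact tendsto_nhds_unique h1 hφ0
    exact hcne ω₀ hω₀s hczero
  case pos =>
    obtain ⟨ω₁', hω₁'T, hd1'⟩ := hex
    have hd1'pos : 0 < d ω₁' := (hdnn _ hω₁'T).lt_of_ne (Ne.symm hd1')
    -- the exposed face
    set lmap : (Fin 2 → ℝ) →ₗ[ℝ] ℝ :=
      ν 0 • (LinearMap.proj 0 : (Fin 2 → ℝ) →ₗ[ℝ] ℝ) + ν 1 • LinearMap.proj 1 with hlmap_def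
    have hlapp : ∀ v : Fin 2 → ℝ, lmap v = pdot v ν := by
      intro v
      simp [hlmap_def, pdot]
      ring
    set L : (Fin 2 → ℝ) →L[ℝ] ℝ := LinearMap.toContinuousLinearMap lmap with hL_def
    have hLapp : ∀ v : Fin 2 → ℝ, L v = pdot v ν := fun v => by
      rw [hL_def]
      simpa using hlapp v
    have hAconv : A = convexHull ℝ (cR '' ↑s) := by rw [hA_def]; rfl
    have hmemA : ∀ ω ∈ s, cR ω ∈ A := fun ω hω => by
      rw [hAconv]
      exact subset_convexHull ℝ _ ⟨ω, by simpa using hω, rfl⟩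
    have hhullLe : ∀ p ∈ A, pdot p ν ≤ M := by
      intro p hp
      have hsub : A ⊆ {y : Fin 2 → ℝ | pdot y ν ≤ M} := by
        rw [hAconv]
        refine convexHull_min ?_
          (convex_halfSpace_le ⟨fun w w' => pdot_add_left w w' ν, fun r w => pdot_smul_left r w ν⟩ M)
        rintro p ⟨ω, hω, rfl⟩
        exact hmax ω (by simpa using hω)
      exact hsub hp
    set Γ : Set (Fin 2 → ℝ) := {p | p ∈ A ∧ ∀ p' ∈ A, pdot p' ν ≤ pdot p ν} with hΓ_def
    have hmemΓ : ∀ p : Fin 2 → ℝ, p ∈ Γ ↔ p ∈ A ∧ pdot p ν = M := by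
      intro p
      constructor
      · rintro ⟨hpA, hpmax⟩
        refine ⟨hpA, le_antisymm (hhullLe p hpA) ?_⟩
        have := hpmax (cR ω₀') (hmemA ω₀' hω₀'s)
        rw [← hM_def] at this
        exact this
      · rintro ⟨hpA, hpM⟩
        exact ⟨hpA, fun p' hp' => by rw [hpM]; exact hhullLe p' hp'⟩
    have hexposed : IsExposed ℝ A Γ := by
      intro _
      refine ⟨L, ?_⟩
      ext p
      simp only [hΓ_def, Set.mem_setOf_eq, hLapp]
    have hω₀Γ : cR ω₀ ∈ Γ := (hmemΓ _).2 ⟨hmemA ω₀ hω₀s, hω₀M⟩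
    have hω₁'Γ : cR ω₁' ∈ Γ :=
      (hmemΓ _).2 ⟨hmemA _ (Finset.mem_filter.1 hω₁'T).1, (Finset.mem_filter.1 hω₁'T).2⟩
    have hside : IsSide A Γ := by
      refine ⟨hexposed, ⟨cR ω₀, hω₀Γ⟩, ?_⟩
      have hker : vectorSpan ℝ Γ ≤ LinearMap.ker lmap := by
        rw [vectorSpan_def, Submodule.span_le]
        rintro v ⟨p, hp, p', hp', rfl⟩
        have h1 := (hmemΓ p).1 hp
        have h2 := (hmemΓ p').1 hp'
        simp only [SetLike.mem_coe, LinearMap.mem_ker, vsub_eq_sub, map_sub]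
        rw [hlapp, hlapp, h1.2, h2.2, sub_self]
      have hνν : pdot ν ν = q := by rw [hq_def]; simp [pdot]; ring
      have hkerrank : Module.finrank ℝ (LinearMap.ker lmap) = 1 := by
        have hsurj : LinearMap.range lmap = ⊤ := by
          rw [LinearMap.range_eq_top]
          intro r
          refine ⟨(r / q) • ν, ?_⟩
          rw [map_smul, hlapp, hνν, smul_eq_mul]
          field_simp
        have hrk := LinearMap.finrank_range_add_finrank_ker lmap
        rw [hsurj, finrank_top] at hrk
        simp [Module.finrank_self, Module.finrank_pi] at hrk
        omega
      have hle : Module.finrank ℝ (vectorSpan ℝ Γ) ≤ 1 :=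
        hkerrank ▸ Submodule.finrank_mono hker
      have hvne : cR ω₁' - cR ω₀ ≠ 0 := by
        intro h
        apply hd1'
        have hEq : cR ω₁' = cR ω₀ := by rwa [sub_eq_zero] at h
        simp only [hd_def, hEq, sub_self]
      have hv : cR ω₁' - cR ω₀ ∈ vectorSpan ℝ Γ := by
        have := vsub_mem_vectorSpan ℝ hω₁'Γ hω₀Γ
        simpa [vsub_eq_sub] using this
      have hge : 1 ≤ Module.finrank ℝ (vectorSpan ℝ Γ) := by
        have hmono := Submodule.finrank_mono (Submodule.span_le.2 (Set.singleton_subset_iff.2 hv))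
        rwa [finrank_span_singleton hvne] at hmono
      omega
    -- far-from-zeros property
    have hdee : pdot e e = q := by rw [hq_def, he_def]; exact pdot_e_self ν
    have hfold : ∀ ω : Fin 2 → ℤ, a ω * ε₁ ^ (ω 0) * ε₂ ^ (ω 1) = c ω := fun _ => rfl
    have hcRfun : ∀ ω : Fin 2 → ℤ, (fun i => (ω i : ℝ)) = cR ω := fun _ => rfl
    have hfar : ∀ t : ℝ, φ t = 0 → ∀ n : ℕ, ε ≤ |α n - t| := by
      intro t ht n
      set v : Fin 2 → ℝ := u (ψ n) + (t - α n) • e with hv_def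
      obtain ⟨y, hy0, hy1, hylog⟩ := exists_point hε₁ hε₂ v
      have hyU : y ∈ U := by rw [hU]; exact ⟨hy0, hy1⟩
      have hαv : pdot v e / q = t := by
        rw [hv_def, pdot_add_left, pdot_smul_left, hdee]
        have hα : α n = pdot (u (ψ n)) e / q := rfl
        rw [hα]
        field_simp
        ring
      have htrunc : laurentTruncEval a Γ y = 0 := by
        rw [trunc_rep a Γ hε₁ hε₂ hy0 hy1, hylog]
        simp only [hfold, hcRfun]
        have hiff : ∀ ω ∈ s, (if cR ω ∈ Γ then c ω * Real.exp (pdot (cR ω) v) else 0)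
            = (if pdot (cR ω) ν = M then c ω * Real.exp (pdot (cR ω) v) else 0) := by
          intro ω hω
          congr 1
          simp only [eq_iff_iff]
          rw [hmemΓ]
          constructor
          · rintro ⟨_, h⟩; exact h
          · intro h; exact ⟨hmemA ω hω, h⟩
        calc ∑ ω ∈ s, (if cR ω ∈ Γ then c ω * Real.exp (pdot (cR ω) v) else 0)
            = ∑ ω ∈ s, (if pdot (cR ω) ν = M then c ω * Real.exp (pdot (cR ω) v) else 0) :=
              Finset.sum_congr rfl hiff
          _ = ∑ ω ∈ T, c ω * Real.exp (pdot (cR ω) v) := (Finset.sum_filter _ _).symm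
          _ = Real.exp (pdot (cR ω₀) v) * φ (pdot v e / q) := hTpart v
          _ = 0 := by rw [hαv, ht, mul_zero]
      have hineq := hxfar (ψ n) Γ hside y hyU htrunc
      rw [hylog] at hineq
      have hdiff : logMap (x (ψ n)) - v = (α n - t) • e := by
        have huu : logMap (x (ψ n)) = u (ψ n) := rfl
        rw [huu, hv_def]
        rw [sub_add_eq_sub_sub, sub_self, zero_sub, ← neg_smul, neg_sub]
      rw [hdiff, norm_smul] at hineq
      have henorm : ‖e‖ ≤ 1 := by
        rw [pi_norm_le_iff_of_nonneg zero_le_one]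
        intro i
        have h0 := norm_le_pi_norm ν 0
        have h1 := norm_le_pi_norm ν 1
        rw [hν1] at h0 h1
        fin_cases i
        · show ‖e 0‖ ≤ 1
          rw [he0]
          simpa using h1
        · show ‖e 1‖ ≤ 1
          rw [he1]
          simpa using h0
      calc ε ≤ ‖α n - t‖ * ‖e‖ := hineq
        _ ≤ |α n - t| * 1 := by
            rw [Real.norm_eq_abs]
            exact mul_le_mul_of_nonneg_left henorm (abs_nonneg _)
        _ = |α n - t| := mul_one _
    -- φ is bounded away from 0 for large |t|
    have hc0 : c ω₀ ≠ 0 := hcne ω₀ hω₀s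
    have hdpos : ∀ ω ∈ T, ω ≠ ω₀ → 0 < d ω := by
      intro ω hω hne
      rcases (hdnn ω hω).lt_or_eq with h | h
      · exact h
      · exact absurd (hdinj ω hω ω₀ hω₀T (by rw [← h, hd00])) hne
    have hbot : Tendsto φ atBot (𝓝 (c ω₀)) := by
      have hcsum : (c ω₀) = ∑ ω ∈ T, (if ω = ω₀ then c ω₀ else 0) := by
        rw [Finset.sum_ite_eq' T ω₀ (fun _ => c ω₀), if_pos hω₀T]
      rw [hφ_def, hcsum]
      refine tendsto_finset_sum _ fun ω hω => ?_
      by_cases hωeq : ω = ω₀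
      · subst hωeq
        simp only [if_pos rfl, hd00, mul_zero, Real.exp_zero, mul_one]
        exact tendsto_const_nhds
      · simp only [if_neg hωeq]
        have hd := hdpos ω hω hωeq
        have h1 : Tendsto (fun t : ℝ => t * d ω) atBot atBot :=
          (tendsto_mul_const_atBot_of_pos hd).2 tendsto_id
        have h2 := Real.tendsto_exp_atBot.comp h1
        simpa using h2.const_mul (c ω)
    obtain ⟨ω₁, hω₁T, hω₁max⟩ := T.exists_max_image d ⟨ω₀, hω₀T⟩
    have hd1pos : 0 < d ω₁ := lt_of_lt_of_le hd1'pos (hω₁max ω₁' hω₁'T)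
    have hc1 : c ω₁ ≠ 0 := hcne ω₁ (Finset.mem_filter.1 hω₁T).1
    have htopφ : Tendsto (fun t => φ t * Real.exp (-(t * d ω₁))) atTop (𝓝 (c ω₁)) := by
      have heq : ∀ t : ℝ, φ t * Real.exp (-(t * d ω₁))
          = ∑ ω ∈ T, c ω * Real.exp (t * (d ω - d ω₁)) := by
        intro t
        rw [hφ_def]
        show (∑ ω ∈ T, c ω * Real.exp (t * d ω)) * Real.exp (-(t * d ω₁)) = _
        rw [Finset.sum_mul]
        refine Finset.sum_congr rfl fun ω hω => ?_
        rw [mul_assoc, ← Real.exp_add]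
        ring_nf
      have hcsum : (c ω₁) = ∑ ω ∈ T, (if ω = ω₁ then c ω₁ else 0) := by
        rw [Finset.sum_ite_eq' T ω₁ (fun _ => c ω₁), if_pos hω₁T]
      rw [funext heq, hcsum]
      refine tendsto_finset_sum _ fun ω hω => ?_
      by_cases hωeq : ω = ω₁
      · subst hωeq
        simp only [if_pos rfl, sub_self, mul_zero, Real.exp_zero, mul_one]
        exact tendsto_const_nhds
      · simp only [if_neg hωeq]
        have hlt : d ω - d ω₁ < 0 :=
          sub_neg.2 ((hω₁max ω hω).lt_of_ne (fun h => hωeq (hdinj ω hω ω₁ hω₁T h)))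
        have h1 : Tendsto (fun t : ℝ => t * (d ω - d ω₁)) atTop atBot :=
          (tendsto_mul_const_atBot_of_neg hlt).2 tendsto_id
        have h2 := Real.tendsto_exp_atBot.comp h1
        simpa using h2.const_mul (c ω)
    have hKbot : ∃ K₁ : ℝ, ∀ t ≤ K₁, |c ω₀| / 2 ≤ |φ t| := by
      have h := Metric.tendsto_nhds.1 hbot (|c ω₀| / 2) (half_pos (abs_pos.2 hc0))
      rw [eventually_atBot] at h
      obtain ⟨K₁, hK₁⟩ := h
      refine ⟨K₁, fun t ht => ?_⟩
      have h1 := hK₁ t ht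
      rw [Real.dist_eq] at h1
      have h2 : |c ω₀| - |φ t| ≤ |φ t - c ω₀| := by
        rw [abs_sub_comm]
        exact abs_sub_abs_le_abs_sub _ _
      linarith
    have hKtop : ∃ K₂ : ℝ, ∀ t : ℝ, K₂ ≤ t → 0 ≤ t → |c ω₁| / 2 ≤ |φ t| := by
      have h := Metric.tendsto_nhds.1 htopφ (|c ω₁| / 2) (half_pos (abs_pos.2 hc1))
      rw [eventually_atTop] at h
      obtain ⟨K₂, hK₂⟩ := h
      refine ⟨K₂, fun t ht ht0 => ?_⟩
      have h1 := hK₂ t ht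
      rw [Real.dist_eq] at h1
      have h2 : |c ω₁| - |φ t * Real.exp (-(t * d ω₁))| ≤ |φ t * Real.exp (-(t * d ω₁)) - c ω₁| := by
        rw [abs_sub_comm]
        exact abs_sub_abs_le_abs_sub _ _
      have h3 : |φ t * Real.exp (-(t * d ω₁))| = |φ t| * Real.exp (-(t * d ω₁)) := by
        rw [abs_mul, abs_of_pos (Real.exp_pos _)]
      have h4 : Real.exp (-(t * d ω₁)) ≤ 1 := by
        rw [Real.exp_le_one_iff]
        nlinarith
      nlinarith [abs_nonneg (φ t), Real.exp_pos (-(t * d ω₁))]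
    obtain ⟨K₁, hK₁⟩ := hKbot
    obtain ⟨K₂, hK₂⟩ := hKtop
    set m : ℝ := min (|c ω₀| / 2) (|c ω₁| / 2) with hm_def
    have hm : 0 < m := lt_min (half_pos (abs_pos.2 hc0)) (half_pos (abs_pos.2 hc1))
    set B : ℝ := max |K₁| (max |K₂| 0) + 1 with hB_def
    have hbound : ∀ t : ℝ, |φ t| < m → |t| ≤ B := by
      intro t hφt
      by_contra hB'
      push_neg at hB'
      have hBK1 : |K₁| ≤ B - 1 := by
        rw [hB_def]
        have := le_max_left |K₁| (max |K₂| 0)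
        linarith
      have hBK2 : |K₂| ≤ B - 1 := by
        rw [hB_def]
        have h1 := le_max_left |K₂| (0:ℝ)
        have h2 := le_max_right |K₁| (max |K₂| 0)
        linarith
      have hB0 : (0:ℝ) ≤ B - 1 := by
        rw [hB_def]
        have h1 := le_max_right |K₂| (0:ℝ)
        have h2 := le_max_right |K₁| (max |K₂| 0)
        linarith
      rcases lt_abs.1 hB' with h | h
      · -- t large positive
        have ht0 : (0:ℝ) ≤ t := by linarith
        have htK : K₂ ≤ t := by
          have := le_abs_self K₂
          linarith
        have := hK₂ t htK ht0
        have hmle := min_le_right (|c ω₀| / 2) (|c ω₁| / 2)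
        rw [← hm_def] at hmle
        linarith
      · -- t large negative
        have htK : t ≤ K₁ := by
          have := neg_abs_le K₁
          linarith
        have := hK₁ t htK
        have hmle := min_le_left (|c ω₀| / 2) (|c ω₁| / 2)
        rw [← hm_def] at hmle
        linarith
    have hev : ∀ᶠ n in atTop, |φ (α n)| < m := by
      have h := Metric.tendsto_nhds.1 hφ0 m hm
      simpa [Real.dist_eq] using h
    rw [eventually_atTop] at hev
    obtain ⟨N, hN⟩ := hev
    set β : ℕ → ℝ := fun k => α (k + N) with hβ_def
    have hβmem : ∀ k, β k ∈ Set.Icc (-B) B := by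
      intro k
      have hb := hbound (β k) (hN (k + N) (Nat.le_add_left N k))
      exact Set.mem_Icc.2 (abs_le.1 hb)
    obtain ⟨t₀, _, θ, hθ, hβlim⟩ := (isCompact_Icc (a := -B) (b := B)).tendsto_subseq hβmem
    have hφcont : Continuous φ := by
      rw [hφ_def]
      exact continuous_finset_sum _ fun ω _ =>
        continuous_const.mul (Real.continuous_exp.comp (continuous_id.mul continuous_const))
    have hφt₀ : φ t₀ = 0 := by
      have h1 : Tendsto (fun k => φ (β (θ k))) atTop (𝓝 (φ t₀)) := by
        have := (hφcont.tendsto t₀).comp hβlim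
        simpa [Function.comp_def] using this
      have h2 : Tendsto (fun k => φ (β (θ k))) atTop (𝓝 0) := by
        have hmono : Tendsto (fun k => θ k + N) atTop atTop := by
          apply tendsto_atTop_mono (fun k => ?_) tendsto_id
          simp only [id_eq]
          have := hθ.le_apply (x := k)
          omega
        have := hφ0.comp hmono
        simpa [hβ_def, Function.comp_def] using this
      exact tendsto_nhds_unique h1 h2
    have hfar' := hfar t₀ hφt₀
    have hevk : ∀ᶠ k in atTop, |β (θ k) - t₀| < ε := by
      have h := Metric.tendsto_nhds.1 hβlim ε hε
      simpa [Real.dist_eq, Function.comp] using h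
    rw [eventually_atTop] at hevk
    obtain ⟨k, hk⟩ := hevk
    have h1 := hk k le_rfl
    have h2 := hfar' (θ k + N)
    have hβk : β (θ k) = α (θ k + N) := rfl
    rw [hβk] at h1
    linarith
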